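/- Let H be a Hopf-Galois algebra with Hopf-Galois map μ. If there exists an algebra map α : H → k, then H is a Hopf algebra with counit α, comultiplication Δ(x) = α(x₍₂₎) x₍₁₎ ⊗ x₍₃₎, and antipode S(x) = α(x₍₁₎x₍₃₎) x₍₂₎. -/

import Mathlib

open TensorProduct MulOpposite

noncomputable section

variable (k : Type*) [Field k]
variable (H : Type*) [Ring H] [Algebra k H]

abbrev HG3 := H ⊗[k] (Hᵐᵒᵖ ⊗[k] H)

def unopL : Hᵐᵒᵖ →ₗ[k] H := (opLinearEquiv k : H ≃ₗ[k] Hᵐᵒᵖ).symm.toLinearMap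

def rightContr : HG3 k H →ₗ[k] H ⊗[k] H :=
  TensorProduct.map LinearMap.id
    (LinearMap.mul' k H ∘ₗ TensorProduct.map (unopL k H) LinearMap.id)

def leftContr : HG3 k H →ₗ[k] H ⊗[k] H :=
  (TensorProduct.map
      (LinearMap.mul' k H ∘ₗ TensorProduct.map LinearMap.id (unopL k H)) LinearMap.id)
    ∘ₗ (TensorProduct.assoc k H Hᵐᵒᵖ H).symm.toLinearMap

structure IsHopfGaloisMap (μ : H →ₐ[k] HG3 k H) : Prop where
  coassoc :
    (TensorProduct.map LinearMap.id (TensorProduct.map LinearMap.id μ.toLinearMap))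
        ∘ₗ μ.toLinearMap =
      (TensorProduct.map LinearMap.id
          (TensorProduct.assoc k Hᵐᵒᵖ H (Hᵐᵒᵖ ⊗[k] H)).toLinearMap)
        ∘ₗ (TensorProduct.assoc k H (Hᵐᵒᵖ ⊗[k] H) (Hᵐᵒᵖ ⊗[k] H)).toLinearMap
        ∘ₗ (TensorProduct.map μ.toLinearMap LinearMap.id)
        ∘ₗ μ.toLinearMap
  counit_right : ∀ r : H, rightContr k H (μ r) = r ⊗ₜ[k] (1 : H)
  counit_left : ∀ r : H, leftContr k H (μ r) = (1 : H) ⊗ₜ[k] r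

/-- The comultiplication `Δ(x) = α(x₍₂₎) x₍₁₎ ⊗ x₍₃₎` built from `μ` and `α`. -/
def comulOf (μ : H →ₐ[k] HG3 k H) (α : H →ₐ[k] k) : H →ₗ[k] H ⊗[k] H :=
  (TensorProduct.map LinearMap.id
      ((TensorProduct.lid k H).toLinearMap
        ∘ₗ TensorProduct.map (α.toLinearMap ∘ₗ unopL k H) LinearMap.id))
    ∘ₗ μ.toLinearMap

/-- The antipode `S(x) = α(x₍₁₎x₍₃₎) x₍₂₎ = α(x₍₁₎)α(x₍₃₎) x₍₂₎` built from `μ` and `α`. -/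
def antipodeOf (μ : H →ₐ[k] HG3 k H) (α : H →ₐ[k] k) : H →ₗ[k] H :=
  (TensorProduct.rid k H).toLinearMap
    ∘ₗ (TensorProduct.lid k (H ⊗[k] k)).toLinearMap
    ∘ₗ (TensorProduct.map α.toLinearMap
          (TensorProduct.map (unopL k H) α.toLinearMap))
    ∘ₗ μ.toLinearMap

/-!
Write `μ x = x₍₁₎ ⊗ x₍₂₎ ⊗ x₍₃₎`. The comultiplication is `μ` followed by contracting the middle
leg with the algebra map `α ∘ unop : Hᵐᵒᵖ → k`, hence an algebra map. Every other axiom, evaluated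
at `x`, is an `α`-contraction of one of the iterated coactions `(μ ⊗ id) (μ x)` and
`(id ⊗ id ⊗ μ) (μ x)`, which coassociativity identifies. Written in the suitable one of the two
forms, the inner `μ` meets `a ⊗ m ⊗ b ↦ α (a m) • b` or `a ⊗ m ⊗ b ↦ α (m b) • a`, and these are
left inverses of `μ` by the two normalisation axioms.
-/

section HopfStructure

variable {k H} (α : H →ₐ[k] k) (μ : H →ₐ[k] HG3 k H)

@[simp]
lemma unopL_apply (m : Hᵐᵒᵖ) : unopL k H m = m.unop :=
  rfl

def contractOp (N : Type*) [AddCommMonoid N] [Module k N] : Hᵐᵒᵖ ⊗[k] N →ₗ[k] N :=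
  (TensorProduct.lid k N).toLinearMap ∘ₗ map (α.toLinearMap ∘ₗ unopL k H) LinearMap.id

@[simp]
lemma contractOp_tmul (N : Type*) [AddCommMonoid N] [Module k N] (m : Hᵐᵒᵖ) (n : N) :
    contractOp α N (m ⊗ₜ n) = α m.unop • n :=
  rfl

lemma comp_contractOp {N N' : Type*} [AddCommMonoid N] [Module k N] [AddCommMonoid N']
    [Module k N'] (f : N →ₗ[k] N') :
    f ∘ₗ contractOp α N = contractOp α N' ∘ₗ map LinearMap.id f := by
  ext m n
  simp

def contractOuter : HG3 k H →ₗ[k] H :=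
  (TensorProduct.rid k H).toLinearMap
    ∘ₗ (TensorProduct.lid k (H ⊗[k] k)).toLinearMap
    ∘ₗ map α.toLinearMap (map (unopL k H) α.toLinearMap)

@[simp]
lemma contractOuter_tmul (a : H) (m : Hᵐᵒᵖ) (b : H) :
    contractOuter α (a ⊗ₜ (m ⊗ₜ b)) = α a • α b • m.unop := by
  simp [contractOuter, smul_tmul', smul_smul, mul_comm]

def leftCounitMap : HG3 k H →ₗ[k] H :=
  (TensorProduct.lid k H).toLinearMap ∘ₗ map α.toLinearMap LinearMap.id
    ∘ₗ leftContr k H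

def rightCounitMap : HG3 k H →ₗ[k] H :=
  (TensorProduct.rid k H).toLinearMap ∘ₗ map LinearMap.id α.toLinearMap
    ∘ₗ rightContr k H

@[simp]
lemma leftCounitMap_tmul (a : H) (m : Hᵐᵒᵖ) (b : H) :
    leftCounitMap α (a ⊗ₜ (m ⊗ₜ b)) = α a • α m.unop • b := by
  simp [leftCounitMap, leftContr, smul_smul]

@[simp]
lemma rightCounitMap_tmul (a : H) (m : Hᵐᵒᵖ) (b : H) :
    rightCounitMap α (a ⊗ₜ (m ⊗ₜ b)) = α m.unop • α b • a := by
  simp [rightCounitMap, rightContr, smul_smul]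

variable (k H) in
def reassoc : HG3 k H ⊗[k] (Hᵐᵒᵖ ⊗[k] H) →ₗ[k] H ⊗[k] (Hᵐᵒᵖ ⊗[k] HG3 k H) :=
  map LinearMap.id (TensorProduct.assoc k Hᵐᵒᵖ H (Hᵐᵒᵖ ⊗[k] H)).toLinearMap
    ∘ₗ (TensorProduct.assoc k H (Hᵐᵒᵖ ⊗[k] H) (Hᵐᵒᵖ ⊗[k] H)).toLinearMap

@[simp]
lemma reassoc_tmul (a : H) (m : Hᵐᵒᵖ) (b : H) (t : Hᵐᵒᵖ ⊗[k] H) :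
    reassoc k H ((a ⊗ₜ (m ⊗ₜ b)) ⊗ₜ t) = a ⊗ₜ (m ⊗ₜ (b ⊗ₜ t)) :=
  rfl

lemma lid_map_map_contractOp (t : HG3 k H) :
    TensorProduct.lid k H (map α.toLinearMap LinearMap.id (map LinearMap.id (contractOp α H) t)) =
      leftCounitMap α t := by
  suffices h : (TensorProduct.lid k H).toLinearMap ∘ₗ map α.toLinearMap LinearMap.id
      ∘ₗ map LinearMap.id (contractOp α H) = leftCounitMap α from
    LinearMap.congr_fun h t
  ext a m b
  simp [smul_smul, mul_comm]

lemma rid_map_map_contractOp (t : HG3 k H) :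
    TensorProduct.rid k H (map LinearMap.id α.toLinearMap (map LinearMap.id (contractOp α H) t)) =
      rightCounitMap α t := by
  suffices h : (TensorProduct.rid k H).toLinearMap ∘ₗ map LinearMap.id α.toLinearMap
      ∘ₗ map LinearMap.id (contractOp α H) = rightCounitMap α from
    LinearMap.congr_fun h t
  ext a m b
  simp [smul_smul, mul_comm]

lemma assoc_map_contractOp_contractOp (t : HG3 k H ⊗[k] (Hᵐᵒᵖ ⊗[k] H)) :
    TensorProduct.assoc k H H H (map (map LinearMap.id (contractOp α H)) (contractOp α H) t) =
      map LinearMap.id (map LinearMap.id (contractOp α H) ∘ₗ contractOp α (HG3 k H))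
        (reassoc k H t) := by
  suffices h : (TensorProduct.assoc k H H H).toLinearMap
        ∘ₗ map (map LinearMap.id (contractOp α H)) (contractOp α H) =
      map LinearMap.id (map LinearMap.id (contractOp α H) ∘ₗ contractOp α (HG3 k H))
        ∘ₗ reassoc k H from
    LinearMap.congr_fun h t
  ext a m b n c
  simp [← smul_tmul', tmul_smul, smul_smul, mul_comm]

lemma mul'_map_contractOuter_contractOp (t : HG3 k H ⊗[k] (Hᵐᵒᵖ ⊗[k] H)) :
    LinearMap.mul' k H (map (contractOuter α) (contractOp α H) t) =
      TensorProduct.lid k H (map α.toLinearMap LinearMap.id (rightContr k H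
        (map LinearMap.id (map LinearMap.id (leftCounitMap α)) (reassoc k H t)))) := by
  suffices h : LinearMap.mul' k H ∘ₗ map (contractOuter α) (contractOp α H) =
      (TensorProduct.lid k H).toLinearMap ∘ₗ map α.toLinearMap LinearMap.id
        ∘ₗ rightContr k H ∘ₗ map LinearMap.id (map LinearMap.id (leftCounitMap α))
        ∘ₗ reassoc k H from
    LinearMap.congr_fun h t
  ext a m b n c
  simp [rightContr, smul_smul, mul_comm, mul_left_comm]

lemma mul'_map_contractOuter_comp_contractOp (t : HG3 k H ⊗[k] (Hᵐᵒᵖ ⊗[k] H)) :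
    LinearMap.mul' k H
        (map LinearMap.id (contractOuter α ∘ₗ contractOp α (HG3 k H)) (reassoc k H t)) =
      TensorProduct.rid k H (map LinearMap.id α.toLinearMap (leftContr k H
        (map (rightCounitMap α) LinearMap.id t))) := by
  suffices h : LinearMap.mul' k H
        ∘ₗ map LinearMap.id (contractOuter α ∘ₗ contractOp α (HG3 k H))
        ∘ₗ reassoc k H =
      (TensorProduct.rid k H).toLinearMap ∘ₗ map LinearMap.id α.toLinearMap
        ∘ₗ leftContr k H ∘ₗ map (rightCounitMap α) LinearMap.id from
    LinearMap.congr_fun h t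
  ext a m b n c
  simp [leftContr, smul_smul, mul_comm, mul_left_comm]

lemma comulOf_eq : comulOf k H μ α = map LinearMap.id (contractOp α H) ∘ₗ μ.toLinearMap :=
  rfl

lemma antipodeOf_eq : antipodeOf k H μ α = contractOuter α ∘ₗ μ.toLinearMap :=
  rfl

def comulAlgHom : H →ₐ[k] H ⊗[k] H :=
  (Algebra.TensorProduct.map (AlgHom.id k H)
    ((Algebra.TensorProduct.lid k H).toAlgHom.comp
      (Algebra.TensorProduct.map (α.fromOpposite fun _ _ => Commute.all _ _)
        (AlgHom.id k H)))).comp μ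

lemma toLinearMap_comulAlgHom : (comulAlgHom α μ).toLinearMap = comulOf k H μ α := by
  rw [comulOf_eq, comulAlgHom, AlgHom.comp_toLinearMap]
  refine congrArg (· ∘ₗ μ.toLinearMap) ?_
  ext a m b
  simp

lemma comulOf_mul (x y : H) :
    comulOf k H μ α (x * y) = comulOf k H μ α x * comulOf k H μ α y := by
  simp only [← toLinearMap_comulAlgHom, AlgHom.toLinearMap_apply, map_mul]

lemma comulOf_one : comulOf k H μ α 1 = 1 := by
  simp only [← toLinearMap_comulAlgHom, AlgHom.toLinearMap_apply, map_one]

namespace IsHopfGaloisMap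

variable {α μ}

lemma reassoc_map_apply (hμ : IsHopfGaloisMap k H μ) (x : H) :
    reassoc k H (map μ.toLinearMap LinearMap.id (μ x)) =
      map LinearMap.id (map LinearMap.id μ.toLinearMap) (μ x) :=
  (LinearMap.congr_fun hμ.coassoc x).symm

lemma leftCounitMap_apply (hμ : IsHopfGaloisMap k H μ) (x : H) : leftCounitMap α (μ x) = x := by
  simp [leftCounitMap, hμ.counit_left x]

lemma rightCounitMap_apply (hμ : IsHopfGaloisMap k H μ) (x : H) :
    rightCounitMap α (μ x) = x := by
  simp [rightCounitMap, hμ.counit_right x]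

lemma lid_map_comulOf (hμ : IsHopfGaloisMap k H μ) (x : H) :
    TensorProduct.lid k H (map α.toLinearMap LinearMap.id (comulOf k H μ α x)) = x :=
  (lid_map_map_contractOp α (μ x)).trans (hμ.leftCounitMap_apply x)

lemma rid_map_comulOf (hμ : IsHopfGaloisMap k H μ) (x : H) :
    TensorProduct.rid k H (map LinearMap.id α.toLinearMap (comulOf k H μ α x)) = x :=
  (rid_map_map_contractOp α (μ x)).trans (hμ.rightCounitMap_apply x)

lemma comulOf_coassoc (hμ : IsHopfGaloisMap k H μ) :
    (TensorProduct.assoc k H H H).toLinearMap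
        ∘ₗ map (comulOf k H μ α) LinearMap.id ∘ₗ comulOf k H μ α =
      map LinearMap.id (comulOf k H μ α) ∘ₗ comulOf k H μ α := by
  ext x
  calc TensorProduct.assoc k H H H (map (comulOf k H μ α) LinearMap.id (comulOf k H μ α x))
      = TensorProduct.assoc k H H H (map (map LinearMap.id (contractOp α H)) (contractOp α H)
          (map μ.toLinearMap LinearMap.id (μ x))) := by
        simp only [comulOf_eq, LinearMap.comp_apply, AlgHom.toLinearMap_apply,
          map_map, LinearMap.comp_id, LinearMap.id_comp]
    _ = map LinearMap.id (map LinearMap.id (contractOp α H) ∘ₗ contractOp α (HG3 k H))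
          (map LinearMap.id (map LinearMap.id μ.toLinearMap) (μ x)) := by
        rw [assoc_map_contractOp_contractOp, hμ.reassoc_map_apply]
    _ = map LinearMap.id (comulOf k H μ α) (comulOf k H μ α x) := by
        simp only [comulOf_eq, LinearMap.comp_apply, AlgHom.toLinearMap_apply,
          map_map, LinearMap.comp_id, LinearMap.comp_assoc]
        rw [comp_contractOp α μ.toLinearMap]

lemma mul'_map_antipodeOf_comulOf (hμ : IsHopfGaloisMap k H μ) (x : H) :
    LinearMap.mul' k H (map (antipodeOf k H μ α) LinearMap.id (comulOf k H μ α x)) =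
      algebraMap k H (α x) :=
  calc LinearMap.mul' k H (map (antipodeOf k H μ α) LinearMap.id (comulOf k H μ α x))
      = LinearMap.mul' k H (map (contractOuter α) (contractOp α H)
          (map μ.toLinearMap LinearMap.id (μ x))) := by
        simp only [comulOf_eq, antipodeOf_eq, LinearMap.comp_apply, AlgHom.toLinearMap_apply,
          map_map, LinearMap.comp_id, LinearMap.id_comp]
    _ = TensorProduct.lid k H (map α.toLinearMap LinearMap.id (rightContr k H
          (map LinearMap.id (map LinearMap.id (leftCounitMap α ∘ₗ μ.toLinearMap))
            (μ x)))) := by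
        rw [mul'_map_contractOuter_contractOp, hμ.reassoc_map_apply]
        simp only [map_map, ← map_comp, LinearMap.comp_id]
    _ = algebraMap k H (α x) := by
        have hleft : leftCounitMap α ∘ₗ μ.toLinearMap = LinearMap.id :=
          LinearMap.ext hμ.leftCounitMap_apply
        simp [hleft, hμ.counit_right x, Algebra.algebraMap_eq_smul_one]

lemma mul'_map_id_antipodeOf_comulOf (hμ : IsHopfGaloisMap k H μ) (x : H) :
    LinearMap.mul' k H (map LinearMap.id (antipodeOf k H μ α) (comulOf k H μ α x)) =
      algebraMap k H (α x) :=
  calc LinearMap.mul' k H (map LinearMap.id (antipodeOf k H μ α) (comulOf k H μ α x))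
      = LinearMap.mul' k H (map LinearMap.id (contractOuter α ∘ₗ contractOp α (HG3 k H))
          (map LinearMap.id (map LinearMap.id μ.toLinearMap) (μ x))) := by
        simp only [comulOf_eq, antipodeOf_eq, LinearMap.comp_apply, AlgHom.toLinearMap_apply,
          map_map, LinearMap.comp_id, LinearMap.comp_assoc]
        rw [comp_contractOp α μ.toLinearMap]
    _ = TensorProduct.rid k H (map LinearMap.id α.toLinearMap (leftContr k H
          (map (rightCounitMap α ∘ₗ μ.toLinearMap) LinearMap.id (μ x)))) := by
        rw [← hμ.reassoc_map_apply, mul'_map_contractOuter_comp_contractOp]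
        simp only [map_map, LinearMap.comp_id]
    _ = algebraMap k H (α x) := by
        have hright : rightCounitMap α ∘ₗ μ.toLinearMap = LinearMap.id :=
          LinearMap.ext hμ.rightCounitMap_apply
        simp [hright, hμ.counit_left x, Algebra.algebraMap_eq_smul_one]

end IsHopfGaloisMap

end HopfStructure

theorem stmt2 (μ : H →ₐ[k] HG3 k H) (hμ : IsHopfGaloisMap k H μ)
    (α : H →ₐ[k] k) :
    (∀ x y : H, comulOf k H μ α (x * y) = comulOf k H μ α x * comulOf k H μ α y) ∧
    comulOf k H μ α 1 = 1 ∧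
    ((TensorProduct.assoc k H H H).toLinearMap
        ∘ₗ (TensorProduct.map (comulOf k H μ α) LinearMap.id) ∘ₗ comulOf k H μ α =
      (TensorProduct.map LinearMap.id (comulOf k H μ α)) ∘ₗ comulOf k H μ α) ∧
    (∀ x : H, (TensorProduct.lid k H)
        ((TensorProduct.map α.toLinearMap LinearMap.id) (comulOf k H μ α x)) = x) ∧
    (∀ x : H, (TensorProduct.rid k H)
        ((TensorProduct.map LinearMap.id α.toLinearMap) (comulOf k H μ α x)) = x) ∧
    (∀ x : H, LinearMap.mul' k H
        ((TensorProduct.map (antipodeOf k H μ α) LinearMap.id) (comulOf k H μ α x)) =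
      algebraMap k H (α x)) ∧
    (∀ x : H, LinearMap.mul' k H
        ((TensorProduct.map LinearMap.id (antipodeOf k H μ α)) (comulOf k H μ α x)) =
      algebraMap k H (α x)) :=
  ⟨comulOf_mul α μ, comulOf_one α μ, hμ.comulOf_coassoc, hμ.lid_map_comulOf,
    hμ.rid_map_comulOf, hμ.mul'_map_antipodeOf_comulOf, hμ.mul'_map_id_antipodeOf_comulOf⟩
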